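/- arXiv:0911.0802 — 4 statements merged into one kernel-verified Lean document; each statement's English description precedes it below -/
import Mathlib

section
/- If 0 < ν < 1 and 2√ν ≤ λ < 1 + ν, then there is no pair (x,y) with x ≠ y satisfying both H(x,y) = 0 and H(y,x) = 0. -/
noncomputable def H (v l x y : ℝ) : ℝ :=
  1 + l^2 - v^2 + 2*l*v*(1 - x^2)*y + 2*x*l*(1 - v^2*y^2) + x^2*y^2*v*(1 - l^2 - v^2)

/-!
The difference `H(x,y) - H(y,x)` factors as `2λ(νxy - 1)(x - y)(ν - 1)`, so a common zero
with `x ≠ y` lies on the hyperbola `νxy = 1`. On that hyperbola `νH` is the constant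
`(1 - ν)((1 + ν)² - λ²)`, which is positive for `0 < ν < 1` and `0 < λ < 1 + ν`.
-/

theorem H_sub_H_swap (v l x y : ℝ) :
    H v l x y - H v l y x = 2 * l * (v * x * y - 1) * (x - y) * (v - 1) := by
  unfold H; ring

theorem mul_mul_eq_one_of_H_eq_H_swap {v l x y : ℝ} (hl : l ≠ 0) (hv : v ≠ 1) (hxy : x ≠ y)
    (h : H v l x y = H v l y x) : v * x * y = 1 := by
  have hprod : 2 * l * (v * x * y - 1) * (x - y) * (v - 1) = 0 := by
    rw [← H_sub_H_swap, h, sub_self]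
  have hxy' : x - y ≠ 0 := sub_ne_zero.2 hxy
  have hv' : v - 1 ≠ 0 := sub_ne_zero.2 hv
  simpa [hl, hxy', hv', sub_eq_zero] using hprod

theorem mul_H_of_mul_mul_eq_one {v l x y : ℝ} (h : v * x * y = 1) :
    v * H v l x y = (1 - v) * ((1 + v) ^ 2 - l ^ 2) := by
  unfold H
  linear_combination (-2 * l * v * x - 2 * l * v ^ 2 * y + (1 - l ^ 2 - v ^ 2) * (v * x * y + 1)) * h

theorem stmt1 (v l : ℝ) (hv0 : 0 < v) (hv1 : v < 1)
    (hl1 : 2*Real.sqrt v ≤ l) (hl2 : l < 1 + v) :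
    ¬ ∃ x y : ℝ, x ≠ y ∧ H v l x y = 0 ∧ H v l y x = 0 := by
  rintro ⟨x, y, hxy, hxy0, hyx0⟩
  have hl0 : 0 < l := lt_of_lt_of_le (by positivity) hl1
  have hvxy : v * x * y = 1 :=
    mul_mul_eq_one_of_H_eq_H_swap hl0.ne' hv1.ne hxy (hxy0.trans hyx0.symm)
  have hpos : 0 < (1 - v) * ((1 + v) ^ 2 - l ^ 2) :=
    mul_pos (by linarith) (by nlinarith)
  have hconst := mul_H_of_mul_mul_eq_one (l := l) hvxy
  rw [hxy0, mul_zero] at hconst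
  exact hpos.ne' hconst.symm
end

section
/- Let (ν,λ) satisfy 0 < ν < 1 and 2√ν ≤ λ < 1 + ν, and let y_c := −(λ + √(λ²−4ν))/(2ν). Then for all y with y_c ≤ y < −1, the coefficient νy(y(1−λ²−ν²) − 2λ) (the coefficient of x² in H(x,y)) is nonzero. -/
/-!
Write `s = √(λ² - 4ν)`, so that `y_c = -(λ + s)/(2ν)` and `(λ + s)(λ - s) = 4ν`. The coefficient
vanishes only at `y = 0` or at `y = 2λ/(1 - λ² - ν²)`; the latter is negative only when
`1 - λ² - ν² < 0`, and then it lies strictly below `y_c` because `λ s < (1 + ν)(1 - ν)`.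
-/

section
variable {v l : ℝ}

lemma sqrt_discrim_lt_one_sub (hv1 : v < 1) (hl0 : 0 < l) (hl2 : l < 1 + v) :
    √(l ^ 2 - 4 * v) < 1 - v := by
  rw [Real.sqrt_lt' (by linarith)]
  nlinarith

lemma mul_sqrt_discrim_lt_one_sub_sq (hv1 : v < 1) (hl0 : 0 < l) (hl2 : l < 1 + v) :
    l * √(l ^ 2 - 4 * v) < 1 - v ^ 2 :=
  calc l * √(l ^ 2 - 4 * v) ≤ l * (1 - v) :=
        mul_le_mul_of_nonneg_left (sqrt_discrim_lt_one_sub hv1 hl0 hl2).le hl0.le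
    _ < (1 + v) * (1 - v) := mul_lt_mul_of_pos_right hl2 (by linarith)
    _ = 1 - v ^ 2 := by ring

lemma mul_one_sub_sq_sub_sq_lt_two_mul (hv0 : 0 < v) (hv1 : v < 1) (hl1 : 2 * √v ≤ l)
    (hl2 : l < 1 + v) {y : ℝ} (hyc : -(l + √(l ^ 2 - 4 * v)) / (2 * v) ≤ y) (hy0 : y < 0) :
    y * (1 - l ^ 2 - v ^ 2) < 2 * l := by
  have hl0 : 0 < l := lt_of_lt_of_le (by positivity) hl1
  rcases le_or_gt 0 (1 - l ^ 2 - v ^ 2) with hA | hA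
  · nlinarith [mul_nonpos_of_nonpos_of_nonneg hy0.le hA]
  set s := √(l ^ 2 - 4 * v)
  have hs2 : s ^ 2 = l ^ 2 - 4 * v :=
    Real.sq_sqrt (by nlinarith [Real.sq_sqrt hv0.le, Real.sqrt_nonneg v])
  have hls : l * s < 1 - v ^ 2 := mul_sqrt_discrim_lt_one_sub_sq hv1 hl0 hl2
  have hlsp : 0 < l + s := by positivity
  calc y * (1 - l ^ 2 - v ^ 2) ≤ -(l + s) / (2 * v) * (1 - l ^ 2 - v ^ 2) :=
        mul_le_mul_of_nonpos_right hyc hA.le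
    _ = (l + s) * (l ^ 2 + v ^ 2 - 1) / (2 * v) := by ring
    _ < (l + s) * (l * (l - s)) / (2 * v) := by gcongr; nlinarith
    _ = 2 * l := by
      rw [div_eq_iff (by positivity)]
      linear_combination (-l) * hs2

end

theorem stmt2 (v l : ℝ) (hv0 : 0 < v) (hv1 : v < 1)
    (hl1 : 2*Real.sqrt v ≤ l) (hl2 : l < 1 + v) :
    ∀ y : ℝ, -(l + Real.sqrt (l^2 - 4*v))/(2*v) ≤ y → y < -1 →
      v*y*(y*(1 - l^2 - v^2) - 2*l) ≠ 0 := by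
  intro y hyc hy1
  have hy0 : y < 0 := by linarith
  have hroot := mul_one_sub_sq_sub_sq_lt_two_mul hv0 hv1 hl1 hl2 hyc hy0
  exact mul_ne_zero (mul_ne_zero hv0.ne' hy0.ne) (sub_ne_zero.mpr hroot.ne)
end

section
/- For every (ν,λ) with ν ∈ (0,1), λ ∈ [2√ν, 1+ν), the real number y₀ := −2λ/(ν²+λ²−1) (defined when ν²+λ² ≠ 1) never lies in the interval [y_c, −1), where y_c := −(λ+√(λ²−4ν))/(2ν). More precisely: if ν²+λ² < 1 then y₀ > 0, and if ν²+λ² > 1 then y₀ ≤ y_c. -/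
theorem stmt7 (v l : ℝ) (hv0 : 0 < v) (hv1 : v < 1)
    (hl1 : 2*Real.sqrt v ≤ l) (hl2 : l < 1 + v) :
    (v^2 + l^2 ≠ 1 →
      ¬ (-(l + Real.sqrt (l^2 - 4*v))/(2*v) ≤ -2*l/(v^2 + l^2 - 1) ∧
         -2*l/(v^2 + l^2 - 1) < -1)) ∧
    (v^2 + l^2 < 1 → 0 < -2*l/(v^2 + l^2 - 1)) ∧
    (1 < v^2 + l^2 →
      -2*l/(v^2 + l^2 - 1) ≤ -(l + Real.sqrt (l^2 - 4*v))/(2*v)) := by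
  have hl0 : 0 < l := lt_of_lt_of_le (by positivity) hl1
  have hsv : Real.sqrt v ^ 2 = v := Real.sq_sqrt hv0.le
  have hl4v : 4*v ≤ l^2 := by nlinarith [Real.sqrt_nonneg v]
  set s := Real.sqrt (l^2 - 4*v) with hs
  have hs0 : 0 ≤ s := Real.sqrt_nonneg _
  have hs2 : s^2 = l^2 - 4*v := Real.sq_sqrt (by linarith)
  -- part 2
  have part2 : v^2 + l^2 < 1 → 0 < -2*l/(v^2 + l^2 - 1) := by
    intro h
    apply div_pos_of_neg_of_neg <;> linarith
  -- strict inequality in the case 1 < v^2 + l^2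
  have part3 : 1 < v^2 + l^2 →
      -2*l/(v^2 + l^2 - 1) < -(l + s)/(2*v) := by
    intro h
    have hD : 0 < v^2 + l^2 - 1 := by linarith
    have hup : l^2 < (1+v)^2 := by nlinarith
    have h4vD : 0 < 4*v - (v^2 + l^2 - 1) := by nlinarith
    have hgap : 0 < (1+v)^2 - l^2 := by linarith
    have hpos2 : 0 < l^2 + (1-v)^2 := by positivity
    have e1 : (s*(v^2 + l^2 - 1))^2 = (l^2 - 4*v)*(v^2 + l^2 - 1)^2 := by
      rw [mul_pow, hs2]
    have hsq : (s*(v^2 + l^2 - 1))^2 < (l*(4*v-(v^2 + l^2 - 1)))^2 := by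
      nlinarith [e1, mul_pos (mul_pos (by linarith : (0:ℝ) < 4*v) hgap) hpos2]
    have hkey : s*(v^2 + l^2 - 1) < l*(4*v-(v^2 + l^2 - 1)) := by
      nlinarith [mul_nonneg hs0 hD.le, mul_pos hl0 h4vD]
    rw [div_lt_div_iff₀ hD (by linarith : (0:ℝ) < 2*v)]
    nlinarith [hkey]
  refine ⟨?_, part2, fun h => (part3 h).le⟩
  intro hne ⟨h1, h2⟩
  rcases lt_or_gt_of_ne hne with h | h
  · have := part2 (by linarith)
    linarith
  · have := part3 (by linarith)
    linarith
end

section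
/- For 0 < ν < 1 and λ = 1 − ν, the polynomial H(x,y) factors as H(x,y) = −2(ν−1)(x(yν−1)((x−1)yν − 1) + yν + 1), and the discriminant quartic W̃(x) := ν((x²−1)²νλ² + x(λ²+2xλ−ν²+1)(2λν + x(λ²+ν²−1))) factors as W̃(x) = ν²(1−ν)²(x−1)(x+1)(x−√5−2)(x+√5−2). -/
noncomputable def Wt (v l x : ℝ) : ℝ :=
  v*((x^2 - 1)^2*v*l^2 + x*(l^2 + 2*x*l - v^2 + 1)*(2*l*v + x*(l^2 + v^2 - 1)))

theorem H_one_sub (v x y : ℝ) :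
    H v (1 - v) x y = -2*(v - 1)*(x*(y*v - 1)*((x - 1)*y*v - 1) + y*v + 1) := by
  unfold H; ring

theorem Wt_one_sub (v x : ℝ) :
    Wt v (1 - v) x = v^2*(1 - v)^2*(x^2 - 1)*(x^2 - 4*x - 1) := by
  unfold Wt; ring

theorem sub_sqrt_five_mul_add_sqrt_five (x : ℝ) :
    (x - Real.sqrt 5 - 2)*(x + Real.sqrt 5 - 2) = x^2 - 4*x - 1 := by
  linear_combination (-1 : ℝ) * Real.sq_sqrt (show (0 : ℝ) ≤ 5 by norm_num)

theorem stmt15_general (v x y : ℝ) :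
    H v (1 - v) x y = -2*(v - 1)*(x*(y*v - 1)*((x - 1)*y*v - 1) + y*v + 1) ∧
    Wt v (1 - v) x
      = v^2*(1 - v)^2*(x - 1)*(x + 1)*(x - Real.sqrt 5 - 2)*(x + Real.sqrt 5 - 2) := by
  refine ⟨H_one_sub v x y, ?_⟩
  rw [Wt_one_sub, mul_assoc _ (x - Real.sqrt 5 - 2), sub_sqrt_five_mul_add_sqrt_five]
  ring

theorem stmt15 (v x y : ℝ) (hv0 : 0 < v) (hv1 : v < 1) :
    H v (1 - v) x y = -2*(v - 1)*(x*(y*v - 1)*((x - 1)*y*v - 1) + y*v + 1) ∧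
    Wt v (1 - v) x
      = v^2*(1 - v)^2*(x - 1)*(x + 1)*(x - Real.sqrt 5 - 2)*(x + Real.sqrt 5 - 2) :=
  stmt15_general v x y
end
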